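/- Assume all agents have additive cost functions. Every PMMS allocation is (2n/(n+1))-MMS. Moreover, for every odd n ≥ 5 and every β with 1 ≤ β < (2n+2)/(n+3), there exists an n-agent instance with additive cost functions and a PMMS allocation that is not β-MMS. -/

import Mathlib

open Finset

/-- `T` is a `k`-partition of the bundle `S`: pairwise disjoint bundles whose union is `S`. -/
def IsPartitionOf {E : Type*} [DecidableEq E] {k : ℕ} (T : Fin k → Finset E) (S : Finset E) :
    Prop :=
  (∀ i j : Fin k, i ≠ j → Disjoint (T i) (T j)) ∧ Finset.univ.biUnion T = S

/-- The maximin share of cost function `c` on `S` among `k` agents: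
the minimum over `k`-partitions of `S` of the maximum cost of a bundle. -/
noncomputable def MMS {E : Type*} [DecidableEq E] (c : Finset E → ℝ) (k : ℕ) (S : Finset E) :
    ℝ :=
  sInf { m : ℝ | ∃ T : Fin k → Finset E, IsPartitionOf T S ∧ m = ⨆ j : Fin k, c (T j) }

/-- `c` is a nonnegative additive cost function. -/
def AdditiveCost {E : Type*} [DecidableEq E] (c : Finset E → ℝ) : Prop :=
  (∀ S : Finset E, 0 ≤ c S) ∧ ∀ S : Finset E, c S = ∑ e ∈ S, c {e}

/-- `c` is a nonnegative monotone cost function with `c ∅ = 0`. -/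
def MonotoneCost {E : Type*} (c : Finset E → ℝ) : Prop :=
  (∀ S : Finset E, 0 ≤ c S) ∧ c ∅ = 0 ∧ ∀ ⦃S T : Finset E⦄, S ⊆ T → c S ≤ c T

/-- `c` is subadditive. -/
def SubadditiveCost {E : Type*} [DecidableEq E] (c : Finset E → ℝ) : Prop :=
  ∀ S T : Finset E, c (S ∪ T) ≤ c S + c T

/-- `c` is submodular. -/
def SubmodularCost {E : Type*} [DecidableEq E] (c : Finset E → ℝ) : Prop :=
  ∀ S T : Finset E, c (S ∪ T) + c (S ∩ T) ≤ c S + c T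

/-- `A` is an allocation of all chores among the `n` agents. -/
def IsAllocation {E : Type*} [DecidableEq E] [Fintype E] {n : ℕ} (A : Fin n → Finset E) : Prop :=
  IsPartitionOf A Finset.univ

/-- `A` is `α`-envy-free. -/
def IsEF {E : Type*} {n : ℕ} (α : ℝ) (c : Fin n → Finset E → ℝ) (A : Fin n → Finset E) : Prop :=
  ∀ i j, c i (A i) ≤ α * c i (A j)

/-- `A` is `α`-envy-free up to one item. -/
def IsEF1 {E : Type*} [DecidableEq E] {n : ℕ} (α : ℝ) (c : Fin n → Finset E → ℝ)
    (A : Fin n → Finset E) : Prop :=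
  ∀ i j, i ≠ j → A i = ∅ ∨ ∃ e ∈ A i, c i (A i \ {e}) ≤ α * c i (A j)

/-- `A` is `α`-envy-free up to any (positive-cost) item. -/
def IsEFX {E : Type*} [DecidableEq E] {n : ℕ} (α : ℝ) (c : Fin n → Finset E → ℝ)
    (A : Fin n → Finset E) : Prop :=
  ∀ i j, i ≠ j → ∀ e ∈ A i, 0 < c i {e} → c i (A i \ {e}) ≤ α * c i (A j)

/-- `A` is an `α`-MMS allocation. -/
def IsMMSFair {E : Type*} [DecidableEq E] [Fintype E] {n : ℕ} (α : ℝ)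
    (c : Fin n → Finset E → ℝ) (A : Fin n → Finset E) : Prop :=
  ∀ i, c i (A i) ≤ α * MMS (c i) n Finset.univ

/-- `A` is an `α`-PMMS allocation. -/
def IsPMMS {E : Type*} [DecidableEq E] {n : ℕ} (α : ℝ)
    (c : Fin n → Finset E → ℝ) (A : Fin n → Finset E) : Prop :=
  ∀ i j, i ≠ j → c i (A i) ≤ α * MMS (c i) 2 (A i ∪ A j)

/-- The optimal (minimum) social cost over all allocations. -/
noncomputable def OPT {E : Type*} [DecidableEq E] [Fintype E] {n : ℕ}
    (c : Fin n → Finset E → ℝ) : ℝ :=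
  sInf { s : ℝ | ∃ A : Fin n → Finset E, IsAllocation A ∧ s = ∑ i, c i (A i) }

/-!
Fix agent `i` with cost `x = c(Aᵢ)` and any `n`-partition `T` of the chores whose bundles cost at
most `M`. If `x > M`, some piece `C = Aᵢ ∩ Tₖ` has positive cost, and so has `Aᵢ \ C` (as
`c(C) ≤ M < x`). Splitting `Aᵢ ∪ Aⱼ` as `(Aᵢ \ C, C ∪ Aⱼ)` and as `(C, (Aᵢ \ C) ∪ Aⱼ)`, PMMS forces
`x ≤ c(C) + c(Aⱼ)` and `x ≤ c(Aᵢ \ C) + c(Aⱼ)`, hence `c(Aⱼ) ≥ x / 2` for every `j ≠ i`. Summing,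
`x + (n - 1) x / 2 ≤ c(E) ≤ n M`.

For the lower bound, agent `0` has `n` big chores of cost `(n + 1) / (n + 3)` and `n` small ones of
cost `2 / (n + 3)`, all other agents are indifferent. Pairing big with small chores gives
`MMS₀ = 1`, while agent `0` receives two big chores. A split of two big chores and the small ones
(`n` odd) or of three big chores always leaves a part costing at least two big chores, which
gives PMMS.
-/

section Partition

variable {E : Type*} [DecidableEq E] {k : ℕ} {T : Fin k → Finset E} {S : Finset E}

lemma exists_isPartitionOf (hk : 0 < k) (S : Finset E) :
    ∃ T : Fin k → Finset E, IsPartitionOf T S := by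
  obtain ⟨m, rfl⟩ : ∃ m, k = m + 1 := ⟨k - 1, by omega⟩
  refine ⟨fun j => if j = 0 then S else ∅, fun i j hij => ?_, ?_⟩
  · by_cases hi : i = 0 <;> by_cases hj : j = 0 <;> simp_all
  · ext e
    simp only [mem_biUnion, mem_univ, true_and]
    exact ⟨fun ⟨j, hj⟩ => by split_ifs at hj <;> simp_all, fun he => ⟨0, by simpa⟩⟩

lemma isPartitionOf_pair {P Q : Finset E} (h : Disjoint P Q) : IsPartitionOf ![P, Q] (P ∪ Q) := by
  refine ⟨fun i j hij => ?_, ?_⟩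
  · fin_cases i <;> fin_cases j <;> simp_all [h.symm]
  · ext e
    simp [Fin.exists_fin_two]

lemma isPartitionOf_fibers [Fintype E] (f : E → ℕ) (hf : ∀ e, f e < k) :
    IsPartitionOf (fun j : Fin k => univ.filter fun e => f e = j) univ := by
  refine ⟨fun i j hij => disjoint_filter.2 fun e _ hi hj => hij (Fin.ext (hi ▸ hj)), ?_⟩
  ext e
  simpa using ⟨⟨f e, hf e⟩, rfl⟩

lemma IsPartitionOf.subset (hT : IsPartitionOf T S) (j : Fin k) : T j ⊆ S :=
  hT.2 ▸ subset_biUnion_of_mem T (mem_univ j)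

lemma IsPartitionOf.inter (hT : IsPartitionOf T S) (X : Finset E) :
    IsPartitionOf (fun j => X ∩ T j) (X ∩ S) :=
  ⟨fun i j hij => (hT.1 i j hij).mono inter_subset_right inter_subset_right,
    by rw [← hT.2, inter_biUnion]⟩

lemma IsPartitionOf.sum_card_filter (hT : IsPartitionOf T S) (p : E → Prop) [DecidablePred p] :
    ∑ j, #{e ∈ T j | p e} = #{e ∈ S | p e} := by
  rw [← hT.2, filter_biUnion, card_biUnion fun i _ j _ hij => disjoint_filter_filter (hT.1 i j hij)]

end Partition

section MaximinShare

variable {E : Type*} [DecidableEq E] {c : Finset E → ℝ} {k : ℕ} {S : Finset E}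

lemma mms_le_iSup (hc : ∀ S, 0 ≤ c S) {T : Fin k → Finset E} (hT : IsPartitionOf T S) :
    MMS c k S ≤ ⨆ j, c (T j) :=
  csInf_le ⟨0, by rintro _ ⟨T, -, rfl⟩; exact Real.iSup_nonneg fun j => hc _⟩ ⟨T, hT, rfl⟩

lemma le_mms (hk : 0 < k) {b : ℝ}
    (h : ∀ T : Fin k → Finset E, IsPartitionOf T S → b ≤ ⨆ j, c (T j)) : b ≤ MMS c k S := by
  obtain ⟨T, hT⟩ := exists_isPartitionOf hk S
  exact le_csInf ⟨_, T, hT, rfl⟩ (by rintro _ ⟨T, hT, rfl⟩; exact h T hT)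

lemma mms_nonneg (hc : ∀ S, 0 ≤ c S) (hk : 0 < k) : 0 ≤ MMS c k S :=
  le_mms hk fun _ _ => Real.iSup_nonneg fun _ => hc _

lemma mms_two_union_le_max (hc : ∀ S, 0 ≤ c S) {P Q : Finset E} (h : Disjoint P Q) :
    MMS c 2 (P ∪ Q) ≤ max (c P) (c Q) :=
  (mms_le_iSup hc (isPartitionOf_pair h)).trans (ciSup_le fun j => by fin_cases j <;> simp)

end MaximinShare

namespace AdditiveCost

variable {E : Type*} [DecidableEq E] {c : Finset E → ℝ}

lemma mono (hc : AdditiveCost c) {S T : Finset E} (h : S ⊆ T) : c S ≤ c T := by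
  rw [hc.2 S, hc.2 T]
  exact sum_le_sum_of_subset_of_nonneg h fun e _ _ => hc.1 {e}

lemma union (hc : AdditiveCost c) {S T : Finset E} (h : Disjoint S T) :
    c (S ∪ T) = c S + c T := by
  rw [hc.2, hc.2 S, hc.2 T, sum_union h]

lemma sdiff (hc : AdditiveCost c) {S C : Finset E} (h : C ⊆ S) : c (S \ C) = c S - c C := by
  rw [eq_sub_iff_add_eq, ← hc.union sdiff_disjoint, sdiff_union_of_subset h]

lemma sum_eq_of_isPartitionOf (hc : AdditiveCost c) {k : ℕ} {T : Fin k → Finset E}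
    {S : Finset E} (hT : IsPartitionOf T S) : ∑ j, c (T j) = c S := by
  rw [← hT.2, hc.2, sum_biUnion fun i _ j _ hij => hT.1 i j hij]
  exact sum_congr rfl fun j _ => hc.2 _

lemma le_mul_iSup (hc : AdditiveCost c) {k : ℕ} {T : Fin k → Finset E} {S : Finset E}
    (hT : IsPartitionOf T S) : c S ≤ k * ⨆ j, c (T j) := by
  rw [← hc.sum_eq_of_isPartitionOf hT]
  calc ∑ j, c (T j) ≤ ∑ _j : Fin k, ⨆ j, c (T j) :=
        sum_le_sum fun j _ => le_ciSup (Finite.bddAbove_range fun j => c (T j)) j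
    _ = k * ⨆ j, c (T j) := by simp

lemma le_add_of_le_mms_two (hc : AdditiveCost c) {X Y C : Finset E} (hXY : Disjoint X Y)
    (hX : c X ≤ MMS c 2 (X ∪ Y)) (hCX : C ⊆ X) (hC : 0 < c C) : c X ≤ c C + c Y := by
  have hsplit : (X \ C) ∪ (C ∪ Y) = X ∪ Y := by
    rw [← union_assoc, sdiff_union_of_subset hCX]
  have h := mms_two_union_le_max hc.1 (P := X \ C) (Q := C ∪ Y)
    (disjoint_union_right.2 ⟨sdiff_disjoint, hXY.mono_left sdiff_subset⟩)
  rw [hsplit, hc.sdiff hCX, hc.union (hXY.mono_left hCX)] at h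
  rcases le_max_iff.1 (hX.trans h) with h | h <;> linarith

lemma le_two_mul_of_le_mms_two (hc : AdditiveCost c) {X Y C : Finset E} (hXY : Disjoint X Y)
    (hX : c X ≤ MMS c 2 (X ∪ Y)) (hCX : C ⊆ X) (hC : 0 < c C) (hCX' : c C < c X) :
    c X ≤ 2 * c Y := by
  have h₁ := hc.le_add_of_le_mms_two hXY hX hCX hC
  have h₂ := hc.le_add_of_le_mms_two hXY hX sdiff_subset (by rw [hc.sdiff hCX]; linarith)
  rw [hc.sdiff hCX] at h₂
  linarith

lemma mul_le_of_le_mms_two (hc : AdditiveCost c) {n : ℕ} {A T : Fin n → Finset E}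
    {S : Finset E} (hA : IsPartitionOf A S) (hT : IsPartitionOf T S) (i : Fin n)
    (hP : ∀ j, j ≠ i → c (A i) ≤ MMS c 2 (A i ∪ A j)) :
    (n + 1) * c (A i) ≤ 2 * n * ⨆ k, c (T k) := by
  set M := ⨆ k, c (T k)
  have hTM : ∀ k, c (T k) ≤ M := le_ciSup (Finite.bddAbove_range _)
  have hM : 0 ≤ M := (hc.1 _).trans (hTM i)
  have hn : (1 : ℝ) ≤ n := by exact_mod_cast i.pos
  by_cases hAM : c (A i) ≤ M
  · nlinarith [hc.1 (A i)]
  rw [not_le] at hAM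
  obtain ⟨k, -, hk⟩ : ∃ k ∈ univ, (0 : ℝ) < c (A i ∩ T k) := by
    refine exists_lt_of_sum_lt ?_
    rw [sum_const_zero, hc.sum_eq_of_isPartitionOf (hT.inter (A i)),
      inter_eq_left.2 (hA.subset i)]
    linarith
  have hhalf : ∀ j, c (A i) ≤ 2 * c (A j) := by
    intro j
    rcases eq_or_ne j i with rfl | hj
    · linarith [hc.1 (A j)]
    exact hc.le_two_mul_of_le_mms_two (hA.1 i j hj.symm) (hP j hj) inter_subset_left hk
      (((hc.mono inter_subset_right).trans (hTM k)).trans_lt hAM)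
  have hsum : (n + 1) * c (A i) ≤ 2 * c S := by
    have := single_le_sum (f := fun j => 2 * c (A j) - c (A i))
      (fun j _ => sub_nonneg.2 (hhalf j)) (mem_univ i)
    rw [sum_sub_distrib, ← mul_sum, hc.sum_eq_of_isPartitionOf hA, sum_const, card_univ,
      Fintype.card_fin, nsmul_eq_mul] at this
    linarith
  nlinarith [hc.le_mul_iSup hT]

end AdditiveCost

theorem isMMSFair_of_isPMMS {E : Type*} [DecidableEq E] [Fintype E] {n : ℕ}
    {c : Fin n → Finset E → ℝ} (hc : ∀ i, AdditiveCost (c i)) {A : Fin n → Finset E}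
    (hA : IsAllocation A) (hP : IsPMMS 1 c A) : IsMMSFair (2 * n / (n + 1)) c A := by
  intro i
  have hn : (0 : ℝ) < n := by exact_mod_cast i.pos
  have h : (n + 1) / (2 * n) * c i (A i) ≤ MMS (c i) n univ :=
    le_mms i.pos fun T hT => by
      rw [div_mul_eq_mul_div, div_le_iff₀ (by positivity)]
      linarith [(hc i).mul_le_of_le_mms_two hA hT i fun j hj => by simpa using hP i j hj.symm]
  calc c i (A i) = 2 * n / (n + 1) * ((n + 1) / (2 * n) * c i (A i)) := by field_simp
    _ ≤ 2 * n / (n + 1) * MMS (c i) n univ := by gcongr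

namespace PMMSLowerBound

/-- Agent `0` weighs the chores `e < n` at `n + 1` and the others at `2`, on the scale
`1 / (n + 3)`. -/
def weight (n : ℕ) (e : Fin (2 * n)) : ℕ := if e.val < n then n + 1 else 2

noncomputable def cost (n : ℕ) (i : Fin n) (S : Finset (Fin (2 * n))) : ℝ :=
  if i.val = 0 then (∑ e ∈ S, weight n e : ℕ) / (n + 3) else 0

/-- Agent `0` gets the big chores `0` and `1`, agent `1` all small chores, and agent `j ≥ 2` the
big chore `j`. -/
def owner (n : ℕ) (e : Fin (2 * n)) : ℕ := if e.val < 2 then 0 else if e.val < n then e.val else 1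

def alloc (n : ℕ) (j : Fin n) : Finset (Fin (2 * n)) :=
  univ.filter fun e => owner n e = j

variable {n : ℕ}

lemma additiveCost_cost (i : Fin n) : AdditiveCost (cost n i) := by
  refine ⟨fun S => by unfold cost; split_ifs <;> positivity, fun S => ?_⟩
  unfold cost
  split_ifs <;> simp [sum_div]

lemma sum_weight (P : Finset (Fin (2 * n))) :
    ∑ e ∈ P, weight n e = (n + 1) * #{e ∈ P | e.val < n} + 2 * #{e ∈ P | ¬ e.val < n} := by
  simp only [weight, sum_ite, sum_const, smul_eq_mul]
  ring

lemma isAllocation_alloc (hn : 2 ≤ n) : IsAllocation (alloc n) :=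
  isPartitionOf_fibers _ fun e => by unfold owner; split_ifs <;> omega

lemma alloc_of_val_eq_zero {i : Fin n} (hi : i.val = 0) :
    alloc n i = univ.filter fun e : Fin (2 * n) => e.val < 2 := by
  ext e
  simp only [alloc, mem_filter, mem_univ, true_and, owner, hi]
  split_ifs <;> grind

lemma val_lt_two_of_mem_alloc {i : Fin n} (hi : i.val = 0) {e : Fin (2 * n)}
    (he : e ∈ alloc n i) : e.val < 2 := by
  rw [alloc_of_val_eq_zero hi] at he
  exact (mem_filter.1 he).2

lemma card_alloc_of_val_eq_zero {i : Fin n} (hi : i.val = 0) : #(alloc n i) = 2 := by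
  rw [alloc_of_val_eq_zero hi, Fin.card_filter_val_lt]
  have := i.pos
  omega

lemma sum_weight_alloc_of_val_eq_zero (hn : 2 ≤ n) {i : Fin n} (hi : i.val = 0) :
    ∑ e ∈ alloc n i, weight n e = 2 * (n + 1) := by
  have hbig : ∀ e ∈ alloc n i, weight n e = n + 1 := fun e he =>
    if_pos (by have := val_lt_two_of_mem_alloc hi he; omega)
  rw [sum_congr rfl hbig, sum_const, card_alloc_of_val_eq_zero hi, smul_eq_mul]

lemma card_filter_not_val_lt : #{e : Fin (2 * n) | ¬ e.val < n} = n := by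
  have := card_filter_add_card_filter_not (s := univ) fun e : Fin (2 * n) => e.val < n
  rw [Fin.card_filter_val_lt, card_univ, Fintype.card_fin] at this
  omega

lemma cost_alloc_of_val_eq_zero (hn : 2 ≤ n) {i : Fin n} (hi : i.val = 0) :
    cost n i (alloc n i) = (2 * n + 2) / (n + 3) := by
  rw [cost, if_pos hi, sum_weight_alloc_of_val_eq_zero hn hi]
  push_cast
  ring

lemma mms_cost_le_one {i : Fin n} (hi : i.val = 0) : MMS (cost n i) n univ ≤ 1 := by
  have hpair : ∀ e : Fin (2 * n), (if e.val < n then e.val else e.val - n) < n := fun e => by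
    split_ifs <;> omega
  refine (mms_le_iSup (additiveCost_cost i).1 (isPartitionOf_fibers _ hpair)).trans
    (Real.iSup_le (fun k => ?_) zero_le_one)
  have hk : ({e | (if e.val < n then e.val else e.val - n) = k} : Finset (Fin (2 * n))) =
      {⟨k, by omega⟩, ⟨n + k, by omega⟩} := by
    ext e
    simp only [mem_filter, mem_univ, true_and, mem_insert, mem_singleton, Fin.ext_iff]
    split_ifs <;> omega
  rw [hk, cost, if_pos hi, sum_pair (by simp only [ne_eq, Fin.mk.injEq]; omega), weight, weight,
    if_pos k.isLt, if_neg (by simp), div_le_one (by positivity)]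
  push_cast
  linarith

lemma two_mul_le_of_counts {b₀ b₁ s₀ s₁ : ℕ}
    (h : 3 ≤ b₀ + b₁ ∨ Odd n ∧ 2 ≤ b₀ + b₁ ∧ n ≤ s₀ + s₁) :
    2 * (n + 1) ≤ (n + 1) * b₀ + 2 * s₀ ∨ 2 * (n + 1) ≤ (n + 1) * b₁ + 2 * s₁ := by
  rcases le_or_gt 2 b₀ with hb₀ | hb₀
  · left; nlinarith
  rcases le_or_gt 2 b₁ with hb₁ | hb₁
  · right; nlinarith
  rcases h with h | ⟨⟨r, rfl⟩, hb, hs⟩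
  · omega
  · interval_cases b₀ <;> interval_cases b₁ <;> omega

lemma exists_two_mul_le_sum_weight (hodd : Odd n) (hn : 2 ≤ n) {i j : Fin n} (hi : i.val = 0)
    (hij : i ≠ j) {T : Fin 2 → Finset (Fin (2 * n))}
    (hT : IsPartitionOf T (alloc n i ∪ alloc n j)) :
    ∃ t, 2 * (n + 1) ≤ ∑ e ∈ T t, weight n e := by
  have hb := hT.sum_card_filter fun e => e.val < n
  have hs := hT.sum_card_filter fun e => ¬ e.val < n
  rw [Fin.sum_univ_two] at hb hs
  simp only [Fin.exists_fin_two, sum_weight]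
  refine two_mul_le_of_counts ?_
  rw [hb, hs]
  have hj : j.val ≠ 0 := fun h => hij (Fin.ext (hi.trans h.symm))
  have hAi_big : alloc n i ⊆ {e ∈ alloc n i ∪ alloc n j | e.val < n} := fun e he =>
    mem_filter.2 ⟨mem_union_left _ he, by linarith [val_lt_two_of_mem_alloc hi he]⟩
  rcases eq_or_ne j.val 1 with hj1 | hj1
  · refine Or.inr ⟨hodd, ?_, ?_⟩
    · exact (card_alloc_of_val_eq_zero hi).symm.le.trans (card_le_card hAi_big)
    · refine card_filter_not_val_lt.symm.le.trans (card_le_card fun e he => ?_)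
      simp only [mem_filter, mem_univ, true_and] at he
      refine mem_filter.2 ⟨mem_union_right _ (mem_filter.2 ⟨mem_univ e, ?_⟩), he⟩
      simp only [owner, hj1]
      split_ifs <;> omega
  · refine Or.inl ?_
    have hjn := j.isLt
    let ej : Fin (2 * n) := ⟨j.val, by omega⟩
    have hej : ej ∉ alloc n i := fun h => by have : j.val < 2 := val_lt_two_of_mem_alloc hi h; omega
    have hsub : insert ej (alloc n i) ⊆ {e ∈ alloc n i ∪ alloc n j | e.val < n} := by
      refine insert_subset (mem_filter.2 ⟨mem_union_right _ (mem_filter.2 ⟨mem_univ ej, ?_⟩),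
        hjn⟩) hAi_big
      simp only [owner, ej]
      split_ifs <;> omega
    have := card_le_card hsub
    rwa [card_insert_of_notMem hej, card_alloc_of_val_eq_zero hi] at this

lemma isPMMS_alloc (hodd : Odd n) (hn : 2 ≤ n) : IsPMMS 1 (cost n) (alloc n) := by
  intro i j hij
  rw [one_mul]
  by_cases hi : i.val = 0
  · refine le_mms two_pos fun T hT => ?_
    obtain ⟨t, ht⟩ := exists_two_mul_le_sum_weight hodd hn hi hij hT
    refine le_ciSup_of_le (Finite.bddAbove_range _) t ?_
    rw [cost_alloc_of_val_eq_zero hn hi, cost, if_pos hi]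
    gcongr
    exact_mod_cast ht
  · rw [cost, if_neg hi]
    exact mms_nonneg (additiveCost_cost i).1 two_pos

lemma not_isMMSFair_alloc (hn : 2 ≤ n) {β : ℝ} (hβ₀ : 0 ≤ β)
    (hβ : β < (2 * n + 2) / (n + 3)) : ¬ IsMMSFair β (cost n) (alloc n) := fun h => by
  have hfair := h ⟨0, by omega⟩
  rw [cost_alloc_of_val_eq_zero hn rfl] at hfair
  nlinarith [mms_cost_le_one (n := n) (i := ⟨0, by omega⟩) rfl]

end PMMSLowerBound

/-- Proposition 5.5: with additive cost functions, every PMMS allocation is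
`2n/(n+1)`-MMS, and for odd `n ≥ 5` a PMMS allocation need not be `β`-MMS for any
`β < (2n+2)/(n+3)`. -/
theorem PMMS_MMS_general_bounds :
    (∀ (E : Type) [DecidableEq E] [Fintype E] (n : ℕ), 2 ≤ n →
      ∀ c : Fin n → Finset E → ℝ, (∀ i, AdditiveCost (c i)) →
      ∀ A : Fin n → Finset E, IsAllocation A → IsPMMS 1 c A →
        IsMMSFair (2 * (n : ℝ) / ((n : ℝ) + 1)) c A) ∧
    (∀ n : ℕ, Odd n → 5 ≤ n → ∀ β : ℝ, 1 ≤ β → β < (2 * (n : ℝ) + 2) / ((n : ℝ) + 3) →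
      ∃ (m : ℕ) (c : Fin n → Finset (Fin m) → ℝ) (A : Fin n → Finset (Fin m)),
        (∀ i, AdditiveCost (c i)) ∧ IsAllocation A ∧ IsPMMS 1 c A ∧
        ¬ IsMMSFair β c A) := by
  refine ⟨fun E _ _ n _ c hc A hA hP => isMMSFair_of_isPMMS hc hA hP, ?_⟩
  intro n hodd hn β hβ₁ hβ
  exact ⟨2 * n, PMMSLowerBound.cost n, PMMSLowerBound.alloc n,
    PMMSLowerBound.additiveCost_cost, PMMSLowerBound.isAllocation_alloc (by omega),
    PMMSLowerBound.isPMMS_alloc hodd (by omega),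
    PMMSLowerBound.not_isMMSFair_alloc (by omega) (by linarith) hβ⟩
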